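/- arXiv:2008.11487 — 7 statements merged into one kernel-verified Lean document; each statement's English description precedes it below -/
import Mathlib

section
/- For each u ∈ {1,…,d} let V_{R,u} = I_u·V_R denote the image of V_R under I_u. Then V_{R,u} ⊆ V_R for every u, the family of subspaces (V_{R,u})_{u=1}^{d} is independent (the sum of these subspaces is direct), and V_R equals the direct sum V_{R,1} ⊕ V_{R,2} ⊕ ⋯ ⊕ V_{R,d}. -/
/-!
The matrices `I_u` are complete orthogonal idempotents: `I_u I_v = δ_{uv} I_u` and `∑ᵤ I_u = 1`.
Every spanning vector of `V_R` starts with a factor `I_w`, so `I_u` fixes it or kills it, and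
`V_R` is `I_u`-invariant. Orthogonality makes the ranges of the `I_u` independent, and
completeness writes every `v ∈ V_R` as `∑ᵤ I_u v`.
-/

open Matrix

noncomputable def diagInd (k d : ℕ) (φ : Fin k → Fin d) (u : Fin d) :
    Matrix (Fin k) (Fin k) ℝ :=
  Matrix.diagonal fun i => if φ i = u then (1 : ℝ) else 0

noncomputable def chain (k d : ℕ) (Q : Matrix (Fin k) (Fin k) ℝ)
    (φ : Fin k → Fin d) : List (Fin d) → Matrix (Fin k) (Fin k) ℝ
  | [] => 1
  | u :: l => diagInd k d φ u * Q * chain k d Q φ l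

noncomputable def reachSpace (k d : ℕ) (Q : Matrix (Fin k) (Fin k) ℝ)
    (φ : Fin k → Fin d) (ρ : Fin k → ℝ) : Submodule ℝ (Fin k → ℝ) :=
  Submodule.span ℝ { v | ∃ (l : List (Fin d)) (u0 : Fin d),
    v = (chain k d Q φ l * diagInd k d φ u0) *ᵥ ρ }

noncomputable def nullSpace (k d : ℕ) (Q : Matrix (Fin k) (Fin k) ℝ)
    (φ : Fin k → Fin d) : Submodule ℝ (Fin k → ℝ) where
  carrier := { v | ∀ (l : List (Fin d)) (u0 : Fin d),
    (1 : Fin k → ℝ) ⬝ᵥ ((chain k d Q φ l * diagInd k d φ u0) *ᵥ v) = 0 }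
  add_mem' := by
    intro a b ha hb l u0
    simp [Matrix.mulVec_add, dotProduct_add, ha l u0, hb l u0]
  zero_mem' := by intro l u0; simp
  smul_mem' := by
    intro c a ha l u0
    simp [Matrix.mulVec_smul, dotProduct_smul, ha l u0]

theorem OrthogonalIdempotents.mul_mul_eq_or {ι A : Type*} [Semiring A] {e : ι → A}
    (he : OrthogonalIdempotents e) (i j : ι) (a : A) :
    e i * (e j * a) = e j * a ∨ e i * (e j * a) = 0 := by
  classical
  rw [← mul_assoc, he.mul_eq]
  split_ifs with h
  · exact Or.inl (by rw [h])
  · exact Or.inr (zero_mul a)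

section Idempotents

variable {R M ι : Type*} [Semiring R] [AddCommMonoid M] [Module R M] {e : ι → Module.End R M}

theorem OrthogonalIdempotents.iSupIndep_range (he : OrthogonalIdempotents e) :
    iSupIndep fun i => LinearMap.range (e i) := by
  refine iSupIndep_def.mpr fun i => Submodule.disjoint_def.mpr ?_
  rintro _ ⟨x, rfl⟩ hx
  have hker : (⨆ (j) (_ : j ≠ i), LinearMap.range (e j)) ≤ LinearMap.ker (e i) :=
    iSup₂_le fun j hj => LinearMap.range_le_ker_iff.mpr (he.ortho hj.symm)
  have hfix : e i (e i x) = e i x := LinearMap.congr_fun (he.idem i).eq x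
  rw [← hfix]
  exact hker hx

theorem CompleteOrthogonalIdempotents.le_iSup_map [Fintype ι]
    (he : CompleteOrthogonalIdempotents e) (V : Submodule R M) :
    V ≤ ⨆ i, V.map (e i) := by
  intro x hx
  have hsum : x = ∑ i, e i x := by
    simpa using (LinearMap.congr_fun he.complete x).symm
  rw [hsum]
  exact Submodule.sum_mem _ fun i _ => Submodule.mem_iSup_of_mem i ⟨x, hx, rfl⟩

end Idempotents

section ReachSpace

variable {k d : ℕ} {φ : Fin k → Fin d}

theorem completeOrthogonalIdempotents_diagInd :
    CompleteOrthogonalIdempotents (diagInd k d φ) := by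
  refine CompleteOrthogonalIdempotents.iff_ortho_complete.mpr ⟨fun u v huv => ?_, ?_⟩
  · simp only [diagInd]
    rw [diagonal_mul_diagonal, ← diagonal_zero]
    congr 1
    funext i
    split_ifs <;> simp_all
  · ext i j
    simp [diagInd, Matrix.sum_apply, diagonal_apply, one_apply]

theorem completeOrthogonalIdempotents_mulVecLin_diagInd :
    CompleteOrthogonalIdempotents fun u => (diagInd k d φ u).mulVecLin :=
  completeOrthogonalIdempotents_diagInd.map
    (Matrix.toLinAlgEquiv' : Matrix (Fin k) (Fin k) ℝ ≃ₐ[ℝ] _).toRingHom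

theorem exists_chain_mul_diagInd_eq (Q : Matrix (Fin k) (Fin k) ℝ) (l : List (Fin d))
    (u0 : Fin d) :
    ∃ w A, chain k d Q φ l * diagInd k d φ u0 = diagInd k d φ w * A := by
  cases l with
  | nil => exact ⟨u0, 1, by simp [chain]⟩
  | cons u l => exact ⟨u, Q * chain k d Q φ l * diagInd k d φ u0, by simp [chain, mul_assoc]⟩

theorem map_diagInd_reachSpace_le (Q : Matrix (Fin k) (Fin k) ℝ) (ρ : Fin k → ℝ) (u : Fin d) :
    (reachSpace k d Q φ ρ).map (diagInd k d φ u).mulVecLin ≤ reachSpace k d Q φ ρ := by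
  rw [reachSpace, Submodule.map_span, Submodule.span_le]
  rintro _ ⟨_, ⟨l, u0, rfl⟩, rfl⟩
  obtain ⟨w, A, hwA⟩ := exists_chain_mul_diagInd_eq Q l u0
  rw [mulVecLin_apply, mulVec_mulVec]
  rcases completeOrthogonalIdempotents_diagInd.mul_mul_eq_or u w A with h | h
  · rw [hwA, h, ← hwA]
    exact Submodule.subset_span ⟨l, u0, rfl⟩
  · rw [hwA, h, zero_mulVec]
    exact zero_mem _

end ReachSpace

theorem reachSpace_directSum_general
    (k d : ℕ) (φ : Fin k → Fin d)
    (Q : Matrix (Fin k) (Fin k) ℝ)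
    (ρ : Fin k → ℝ) :
    (∀ u : Fin d,
      Submodule.map (diagInd k d φ u).mulVecLin (reachSpace k d Q φ ρ) ≤ reachSpace k d Q φ ρ) ∧
    iSupIndep (fun u : Fin d =>
      Submodule.map (diagInd k d φ u).mulVecLin (reachSpace k d Q φ ρ)) ∧
    reachSpace k d Q φ ρ =
      ⨆ u : Fin d, Submodule.map (diagInd k d φ u).mulVecLin (reachSpace k d Q φ ρ) := by
  have he := completeOrthogonalIdempotents_mulVecLin_diagInd (φ := φ)
  refine ⟨map_diagInd_reachSpace_le Q ρ, ?_, ?_⟩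
  · exact he.iSupIndep_range.mono fun u => LinearMap.map_le_range
  · exact le_antisymm (he.le_iSup_map _) (iSup_le (map_diagInd_reachSpace_le Q ρ))

/-- With `V_{R,u} = I_u · V_R`, each `V_{R,u}` is contained in `V_R`, the family
`(V_{R,u})ᵤ` is independent (their sum is direct), and `V_R = ⨁ᵤ V_{R,u}`. -/
theorem reachSpace_directSum
    (k d : ℕ) (hk : 0 < k) (hd : 0 < d) (φ : Fin k → Fin d)
    (Q : Matrix (Fin k) (Fin k) ℝ)
    (hQ : (1 : Fin k → ℝ) ᵥ* Q = 1)
    (ρ : Fin k → ℝ) (hρ : Q *ᵥ ρ = ρ) :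
    (∀ u : Fin d,
      Submodule.map (diagInd k d φ u).mulVecLin (reachSpace k d Q φ ρ) ≤ reachSpace k d Q φ ρ) ∧
    iSupIndep (fun u : Fin d =>
      Submodule.map (diagInd k d φ u).mulVecLin (reachSpace k d Q φ ρ)) ∧
    reachSpace k d Q φ ρ =
      ⨆ u : Fin d, Submodule.map (diagInd k d φ u).mulVecLin (reachSpace k d Q φ ρ) :=
  reachSpace_directSum_general k d φ Q ρ
end

section
/- Assume that for every u ∈ {1,…,d} the subspace I_u·V_R is not contained in ker e^T. Let k̂ = dim V_R. Then there exist a matrix T ∈ ℝ^{k×k̂} of rank k̂ (full column rank) and a map φ̂ : {1,…,k̂} → {1,…,d} such that: (i) T_{ij} = 0 whenever φ(i) ≠ φ̂(j); (ii) the column space of T equals V_R; and (iii) e^T T = ê^T, where ê ∈ ℝ^{k̂} is the all-ones vector (i.e., every column of T sums to 1). -/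
/-!
The generators of `V_R` have the form `I_u w`, so each is supported on the single block
`φ⁻¹(u)`; hence `V_R` is spanned by exactly `k̂` block vectors `b_1, …, b_k̂`, with blocks
`φ̂(j)`. The hypothesis on `I_u V_R` yields, for every block `u`, a member `b_{p(u)}` of
block `u` with nonzero column sum. Replacing `b_j` by
`b_j + (1 - eᵀb_j)/(eᵀb_{p(u)}) · b_{p(u)}`, `u = φ̂(j)`, makes every column sum `1` and
keeps both the blocks and the span, since the pivots `b_{p(u)}` are themselves only rescaled.
-/

open Matrix

open Submodule

section BlockSupport

variable (K : Type*) {ι β : Type*} [Semiring K]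

def blockSubspace (φ : ι → β) (u : β) : Submodule K (ι → K) :=
  Submodule.pi {i | φ i ≠ u} fun _ => ⊥

variable {K}

lemma mem_blockSubspace {φ : ι → β} {u : β} {v : ι → K} :
    v ∈ blockSubspace K φ u ↔ ∀ i, φ i ≠ u → v i = 0 := by
  simp [blockSubspace, Submodule.mem_pi]

end BlockSupport

section DiagInd

variable {k d : ℕ} {φ : Fin k → Fin d}

lemma diagInd_mulVec_apply (u : Fin d) (v : Fin k → ℝ) (i : Fin k) :
    (diagInd k d φ u *ᵥ v) i = if φ i = u then v i else 0 := by
  simp [diagInd, mulVec_diagonal]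

lemma diagInd_mulVec_mem_blockSubspace (u : Fin d) (v : Fin k → ℝ) :
    diagInd k d φ u *ᵥ v ∈ blockSubspace ℝ φ u :=
  mem_blockSubspace.2 fun i hi => by rw [diagInd_mulVec_apply, if_neg hi]

lemma diagInd_mulVec_of_mem_blockSubspace {u w : Fin d} {v : Fin k → ℝ}
    (hv : v ∈ blockSubspace ℝ φ w) : diagInd k d φ u *ᵥ v = if w = u then v else 0 := by
  funext i
  rw [diagInd_mulVec_apply]
  rcases eq_or_ne w u with rfl | hwu
  · rw [if_pos rfl]
    split_ifs with hi
    · rfl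
    · exact (mem_blockSubspace.1 hv i hi).symm
  · rw [if_neg hwu]
    split_ifs with hi
    · exact mem_blockSubspace.1 hv i fun h => hwu (h ▸ hi)
    · rfl

end DiagInd

lemma exists_diagInd_mulVec_eq_chain_mul_diagInd_mulVec (k d : ℕ)
    (Q : Matrix (Fin k) (Fin k) ℝ) (φ : Fin k → Fin d) (ρ : Fin k → ℝ)
    (l : List (Fin d)) (u0 : Fin d) :
    ∃ u w, (chain k d Q φ l * diagInd k d φ u0) *ᵥ ρ = diagInd k d φ u *ᵥ w := by
  cases l with
  | nil => exact ⟨u0, ρ, by simp [chain]⟩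
  | cons u l =>
    refine ⟨u, (Q * chain k d Q φ l * diagInd k d φ u0) *ᵥ ρ, ?_⟩
    simp only [chain, mulVec_mulVec, Matrix.mul_assoc]

lemma exists_blockwise_family_span_eq_reachSpace (k d : ℕ)
    (Q : Matrix (Fin k) (Fin k) ℝ) (φ : Fin k → Fin d) (ρ : Fin k → ℝ) :
    ∃ (b : Fin (Module.finrank ℝ (reachSpace k d Q φ ρ)) → Fin k → ℝ)
      (c : Fin (Module.finrank ℝ (reachSpace k d Q φ ρ)) → Fin d),
      (∀ j, b j ∈ blockSubspace ℝ φ (c j)) ∧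
        span ℝ (Set.range b) = reachSpace k d Q φ ρ := by
  set V := reachSpace k d Q φ ρ
  set S := {v | v ∈ V ∧ ∃ u, v ∈ blockSubspace ℝ φ u}
  have hS : span ℝ S = V := by
    refine le_antisymm (span_le.2 fun v hv => hv.1) (span_le.2 ?_)
    rintro _ ⟨l, u0, rfl⟩
    obtain ⟨u, w, hw⟩ := exists_diagInd_mulVec_eq_chain_mul_diagInd_mulVec k d Q φ ρ l u0
    refine subset_span ⟨subset_span ⟨l, u0, rfl⟩, u, ?_⟩
    exact hw ▸ diagInd_mulVec_mem_blockSubspace u w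
  rw [← hS]
  obtain ⟨b, hbS, hb, -⟩ := exists_fun_fin_finrank_span_eq ℝ S
  choose _ c hc using hbS
  exact ⟨b, c, hc, hb⟩

lemma exists_apply_ne_zero_of_mem_span_range {R M N ι : Type*} [Semiring R] [AddCommMonoid M]
    [Module R M] [AddCommMonoid N] [Module R N] (g : M →ₗ[R] N) {b : ι → M} {v : M}
    (hv : v ∈ span R (Set.range b)) (hgv : g v ≠ 0) : ∃ j, g (b j) ≠ 0 := by
  by_contra! h
  exact hgv (span_le.2 (Set.range_subset_iff.2 h : Set.range b ⊆ LinearMap.ker g) hv)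

lemma exists_pivot {k d n : ℕ} {φ : Fin k → Fin d} {V : Submodule ℝ (Fin k → ℝ)}
    {b : Fin n → Fin k → ℝ} {c : Fin n → Fin d}
    (hb : ∀ j, b j ∈ blockSubspace ℝ φ (c j))
    (hspan : span ℝ (Set.range b) = V) {u : Fin d}
    (hu : ∃ v ∈ V.map (diagInd k d φ u).mulVecLin, (1 : Fin k → ℝ) ⬝ᵥ v ≠ 0) :
    ∃ j, c j = u ∧ (1 : Fin k → ℝ) ⬝ᵥ b j ≠ 0 := by
  obtain ⟨_, ⟨w, hw, rfl⟩, hw0⟩ := hu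
  obtain ⟨j, hj⟩ := exists_apply_ne_zero_of_mem_span_range
    ((dotProductBilin ℝ ℝ 1).comp (diagInd k d φ u).mulVecLin) (hspan ▸ hw) hw0
  simp only [LinearMap.comp_apply, mulVecLin_apply, diagInd_mulVec_of_mem_blockSubspace (hb j),
    dotProductBilin_apply_apply] at hj
  by_cases hcj : c j = u
  · exact ⟨j, hcj, by simpa [hcj] using hj⟩
  · simp [hcj] at hj

section NormalizedFamily

variable {K M ι β : Type*} [Field K] [AddCommGroup M] [Module K M]
  (f : M →ₗ[K] K) (b : ι → M) (c : ι → β) (p : β → ι)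

def normalizedFamily (j : ι) : M :=
  b j + ((1 - f (b j)) * (f (b (p (c j))))⁻¹) • b (p (c j))

variable {f b c p}

lemma apply_normalizedFamily (j : ι) (hp : f (b (p (c j))) ≠ 0) :
    f (normalizedFamily f b c p j) = 1 := by
  simp only [normalizedFamily, map_add, map_smul, smul_eq_mul]
  field_simp
  ring

lemma normalizedFamily_mem {W : Submodule K M} {j : ι} (hj : b j ∈ W) (hp : b (p (c j)) ∈ W) :
    normalizedFamily f b c p j ∈ W :=
  W.add_mem hj (W.smul_mem _ hp)

lemma normalizedFamily_pivot {u : β} (hcp : c (p u) = u) (hfp : f (b (p u)) ≠ 0) :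
    normalizedFamily f b c p (p u) = (f (b (p u)))⁻¹ • b (p u) := by
  rw [normalizedFamily, hcp, ← one_smul K (b (p u)), smul_smul, ← add_smul, one_smul]
  congr 1
  field_simp
  ring

lemma span_range_normalizedFamily (hcp : ∀ u, c (p u) = u) (hfp : ∀ u, f (b (p u)) ≠ 0) :
    span K (Set.range (normalizedFamily f b c p)) = span K (Set.range b) := by
  refine le_antisymm (span_le.2 ?_) (span_le.2 ?_)
  · rintro _ ⟨j, rfl⟩
    exact normalizedFamily_mem (subset_span ⟨j, rfl⟩) (subset_span ⟨_, rfl⟩)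
  · rintro _ ⟨j, rfl⟩
    have hpivot : b (p (c j)) = f (b (p (c j))) • normalizedFamily f b c p (p (c j)) := by
      rw [normalizedFamily_pivot (hcp _) (hfp _), smul_smul, mul_inv_cancel₀ (hfp _), one_smul]
    have hbj : b j = normalizedFamily f b c p j -
        ((1 - f (b j)) * (f (b (p (c j))))⁻¹ * f (b (p (c j)))) •
          normalizedFamily f b c p (p (c j)) := by
      rw [← smul_smul, ← hpivot, normalizedFamily, add_sub_cancel_right]
    rw [hbj]
    exact sub_mem (subset_span ⟨j, rfl⟩) (smul_mem _ _ (subset_span ⟨_, rfl⟩))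

end NormalizedFamily

theorem exists_basis_matrix_reachSpace_general
    (k d : ℕ) (φ : Fin k → Fin d)
    (Q : Matrix (Fin k) (Fin k) ℝ)
    (ρ : Fin k → ℝ)
    (hassum : ∀ u : Fin d,
      ∃ v ∈ Submodule.map (diagInd k d φ u).mulVecLin (reachSpace k d Q φ ρ),
        (1 : Fin k → ℝ) ⬝ᵥ v ≠ 0)
    (khat : ℕ) (hkhat : khat = Module.finrank ℝ (reachSpace k d Q φ ρ)) :
    ∃ (T : Matrix (Fin k) (Fin khat) ℝ) (φhat : Fin khat → Fin d),
      T.rank = khat ∧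
      (∀ (i : Fin k) (j : Fin khat), φ i ≠ φhat j → T i j = 0) ∧
      LinearMap.range T.mulVecLin = reachSpace k d Q φ ρ ∧
      (1 : Fin k → ℝ) ᵥ* T = 1 := by
  subst hkhat
  obtain ⟨b, c, hb, hspan⟩ := exists_blockwise_family_span_eq_reachSpace k d Q φ ρ
  choose p hcp hfp using fun u => exists_pivot hb hspan (hassum u)
  set t := normalizedFamily (dotProductBilin ℝ ℝ 1) b c p
  have ht_span : span ℝ (Set.range t) = reachSpace k d Q φ ρ :=
    (span_range_normalizedFamily hcp hfp).trans hspan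
  have hT_col : (Matrix.of fun i j => t j i).col = t := rfl
  refine ⟨Matrix.of fun i j => t j i, c, ?_, fun i j hij => ?_, ?_, ?_⟩
  · rw [rank_eq_finrank_span_cols, hT_col, ht_span]
  · have hcol : b (p (c j)) ∈ blockSubspace ℝ φ (c j) := by
      simpa only [hcp] using hb (p (c j))
    exact mem_blockSubspace.1 (normalizedFamily_mem (hb j) hcol) i hij
  · rw [range_mulVecLin, hT_col, ht_span]
  · funext j
    exact apply_normalizedFamily (f := dotProductBilin ℝ ℝ 1) (b := b) (c := c) j (hfp (c j))

/-- If no `I_u · V_R` is contained in `ker eᵀ`, then with `k̂ = dim V_R` there is a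
full-column-rank `T ∈ ℝ^{k×k̂}` and `φ̂ : Fin k̂ → Fin d` such that `T i j = 0` whenever
`φ i ≠ φ̂ j`, the column space of `T` is `V_R`, and every column of `T` sums to `1`. -/
theorem exists_basis_matrix_reachSpace
    (k d : ℕ) (hk : 0 < k) (hd : 0 < d) (φ : Fin k → Fin d)
    (Q : Matrix (Fin k) (Fin k) ℝ)
    (hQ : (1 : Fin k → ℝ) ᵥ* Q = 1)
    (ρ : Fin k → ℝ) (hρ : Q *ᵥ ρ = ρ)
    (hassum : ∀ u : Fin d,
      ∃ v ∈ Submodule.map (diagInd k d φ u).mulVecLin (reachSpace k d Q φ ρ),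
        (1 : Fin k → ℝ) ⬝ᵥ v ≠ 0)
    (khat : ℕ) (hkhat : khat = Module.finrank ℝ (reachSpace k d Q φ ρ)) :
    ∃ (T : Matrix (Fin k) (Fin khat) ℝ) (φhat : Fin khat → Fin d),
      T.rank = khat ∧
      (∀ (i : Fin k) (j : Fin khat), φ i ≠ φhat j → T i j = 0) ∧
      LinearMap.range T.mulVecLin = reachSpace k d Q φ ρ ∧
      (1 : Fin k → ℝ) ᵥ* T = 1 :=
  exists_basis_matrix_reachSpace_general k d φ Q ρ hassum khat hkhat
end

section
/- Let k̂ = k − dim V_N. Then there exist a matrix T ∈ ℝ^{k̂×k} of rank k̂ (full row rank) and a map φ̂ : {1,…,k̂} → {1,…,d} such that: (i) T_{ij} = 0 whenever φ̂(i) ≠ φ(j); (ii) ker T = V_N; and (iii) e^T = ê^T T, where ê ∈ ℝ^{k̂} is the all-ones vector (i.e., the rows of T sum to e^T). -/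
/-! The projections `diagInd u` are complete orthogonal idempotents leaving `V_N` invariant, so they
descend to `ℝ^k ⧸ V_N`, which is then the direct sum of their ranges `M_u`. The functional `eᵀ`
vanishes on `V_N`, and on each nonzero `M_u` it is nonzero, so `M_u` has a basis on which `eᵀ` is
identically `1`. The coordinates with respect to the concatenation of these bases form `T`: the
class of the `j`-th standard basis vector lies in `M_{φ j}`, and since `eᵀ` is `1` on every basis
vector, the coordinates of any class sum to its value under `eᵀ`. -/

open Matrix

section Field

variable {K V : Type*} [Field K] [AddCommGroup V] [Module K V]

theorem Module.Basis.sum_repr_eq_of_forall_apply_eq_one {ι : Type*} [Fintype ι]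
    (b : Module.Basis ι K V) {ε : V →ₗ[K] K} (hb : ∀ i, ε (b i) = 1) (x : V) :
    ∑ i, b.repr x i = ε x := by
  conv_rhs => rw [← b.sum_repr x]
  simp only [map_sum, map_smul, hb, smul_eq_mul, mul_one]

theorem exists_basis_forall_apply_eq_one [FiniteDimensional K V] (ε : V →ₗ[K] K)
    (hε : ε = 0 → Module.finrank K V = 0) :
    ∃ b : Module.Basis (Fin (Module.finrank K V)) K V, ∀ i, ε (b i) = 1 := by
  set a := Module.finBasis K V
  by_cases h0 : ε = 0
  · exact ⟨a, fun i => absurd i.2 (by simp [hε h0])⟩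
  obtain ⟨i₀, hi₀⟩ : ∃ i₀, ε (a i₀) ≠ 0 := by
    by_contra! h
    exact h0 (a.ext fun i => by simp [h i])
  -- shift each `a i` along `w` onto the hyperplane `ε = 1`; since `b i₀ = w`, `b` still spans
  set w := (ε (a i₀))⁻¹ • a i₀
  have hw : ε w = 1 := by simp [w, hi₀]
  set b := fun i => a i + (1 - ε (a i)) • w
  have hbi₀ : b i₀ = w := by
    simp only [b, w, smul_smul]
    match_scalars
    field_simp
    ring
  have hspan : ⊤ ≤ Submodule.span K (Set.range b) := by
    rw [← a.span_eq, Submodule.span_le]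
    rintro _ ⟨i, rfl⟩
    have hai : a i = b i - (1 - ε (a i)) • b i₀ := by simp [hbi₀, b]
    rw [SetLike.mem_coe, hai]
    exact sub_mem (Submodule.subset_span ⟨i, rfl⟩)
      (Submodule.smul_mem _ _ (Submodule.subset_span ⟨i₀, rfl⟩))
  refine ⟨basisOfTopLeSpanOfCardEqFinrank b hspan (Fintype.card_fin _), fun i => ?_⟩
  simp [b, hw]

end Field

namespace CompleteOrthogonalIdempotents

section Ring

variable {R M I : Type*} [Ring R] [AddCommGroup M] [Module R M] [Fintype I]
  {e : I → Module.End R M}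

theorem isInternal_range [DecidableEq I] (he : CompleteOrthogonalIdempotents e) :
    DirectSum.IsInternal fun i => LinearMap.range (e i) := by
  rw [DirectSum.isInternal_submodule_iff_iSupIndep_and_iSup_eq_top]
  constructor
  · refine iSupIndep_def.mpr fun i => Submodule.disjoint_def.mpr ?_
    rintro _ ⟨y, rfl⟩ hy
    have hker : (⨆ (j) (_ : j ≠ i), LinearMap.range (e j)) ≤ LinearMap.ker (e i) :=
      iSup₂_le fun j hji => LinearMap.range_le_ker_iff.mpr (he.ortho hji.symm)
    calc e i y = e i (e i y) := by rw [← Module.End.mul_apply, (he.idem i).eq]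
      _ = 0 := hker hy
  · refine eq_top_iff.mpr fun x _ => ?_
    have hx : ∑ i, e i x = x := by rw [← LinearMap.sum_apply, he.complete, Module.End.one_apply]
    exact hx ▸ Submodule.sum_mem_iSup fun i => LinearMap.mem_range_self (e i) x

theorem mapQ (he : CompleteOrthogonalIdempotents e) (N : Submodule R M)
    (hN : ∀ i, N ≤ N.comap (e i)) :
    CompleteOrthogonalIdempotents fun i => N.mapQ N (e i) (hN i) := by
  refine iff_ortho_complete.mpr ⟨fun i j hij => N.linearMap_qext ?_, N.linearMap_qext ?_⟩
  · ext x
    simp only [LinearMap.comp_apply, Submodule.mkQ_apply, Module.End.mul_apply,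
      Submodule.mapQ_apply, ← Module.End.mul_apply (e i), he.ortho hij]
    simp
  · ext x
    simp only [LinearMap.comp_apply, LinearMap.sum_apply, Submodule.mkQ_apply,
      Submodule.mapQ_apply, Module.End.one_apply]
    simp_rw [← Submodule.mkQ_apply]
    rw [← map_sum, ← LinearMap.sum_apply, he.complete, Module.End.one_apply]

end Ring

variable {K V I : Type*} [Field K] [AddCommGroup V] [Module K V] [FiniteDimensional K V]
  [Fintype I] [DecidableEq I] {e : I → Module.End K V}

theorem exists_block_basis_forall_apply_eq_one (he : CompleteOrthogonalIdempotents e)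
    (ε : V →ₗ[K] K) (hε : ∀ i, ε ∘ₗ e i = 0 → e i = 0) :
    ∃ (m : I → ℕ) (b : Module.Basis (Σ i, Fin (m i)) K V),
      (∀ i, ∀ x ∈ LinearMap.range (e i), ∀ a : Σ i, Fin (m i), a.1 ≠ i → b.repr x a = 0) ∧
      ∀ a, ε (b a) = 1 := by
  have hblock : ∀ i, ∃ c : Module.Basis (Fin (Module.finrank K (LinearMap.range (e i)))) K
      (LinearMap.range (e i)), ∀ j, ε (c j) = 1 := by
    intro i
    refine exists_basis_forall_apply_eq_one (ε.domRestrict _) fun h => ?_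
    have : e i = 0 := hε i <| LinearMap.ext fun x => by
      simpa using LinearMap.congr_fun h ⟨e i x, LinearMap.mem_range_self _ x⟩
    simp [this]
  choose c hc using hblock
  refine ⟨_, he.isInternal_range.collectedBasis c,
    fun i x hx a ha => he.isInternal_range.collectedBasis_repr_of_mem_ne c (Ne.symm ha) hx,
    fun a => ?_⟩
  simpa [DirectSum.IsInternal.collectedBasis_coe] using hc a.1 a.2

theorem exists_surjective_linearMap_ker_eq (he : CompleteOrthogonalIdempotents e)
    (N : Submodule K V) (hN : ∀ i, N ≤ N.comap (e i)) (ε : V →ₗ[K] K) (hεN : N ≤ LinearMap.ker ε)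
    (hε : ∀ i, ε ∘ₗ e i = 0 → e i = 0) {n : ℕ}
    (hn : n = Module.finrank K V - Module.finrank K N) :
    ∃ (c : Fin n → I) (L : V →ₗ[K] Fin n → K), Function.Surjective L ∧ LinearMap.ker L = N ∧
      (∀ i, ∀ x ∈ LinearMap.range (e i), ∀ a, c a ≠ i → L x a = 0) ∧
      ∀ x, ∑ a, L x a = ε x := by
  have hεq : ∀ i, N.liftQ ε hεN ∘ₗ N.mapQ N (e i) (hN i) = 0 → N.mapQ N (e i) (hN i) = 0 := by
    intro i h
    have hi : e i = 0 := hε i <| LinearMap.ext fun x => by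
      simpa using LinearMap.congr_fun h (N.mkQ x)
    exact N.linearMap_qext (by ext; simp [hi])
  obtain ⟨m, b, hb_block, hb_one⟩ := (he.mapQ N hN).exists_block_basis_forall_apply_eq_one _ hεq
  have hcard : Fintype.card (Σ i, Fin (m i)) = n := by
    rw [hn, ← Submodule.finrank_quotient, Module.finrank_eq_card_basis b]
  set σ := Fintype.equivFinOfCardEq hcard
  refine ⟨fun a => (σ.symm a).1, (b.reindex σ).equivFun.toLinearMap ∘ₗ N.mkQ,
    (b.reindex σ).equivFun.surjective.comp N.mkQ_surjective, ?_, ?_, fun x => ?_⟩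
  · rw [LinearEquiv.ker_comp, Submodule.ker_mkQ]
  · rintro i _ ⟨y, rfl⟩ a ha
    simpa using hb_block i _ (LinearMap.mem_range_self _ (N.mkQ y)) (σ.symm a) ha
  · simpa using (b.reindex σ).sum_repr_eq_of_forall_apply_eq_one
      (ε := N.liftQ ε hεN) (fun a => by simpa using hb_one (σ.symm a)) (N.mkQ x)

end CompleteOrthogonalIdempotents

section nullSpace

variable {k d : ℕ} {φ : Fin k → Fin d}

theorem diagInd_mulVec_single (u : Fin d) (j : Fin k) :
    diagInd k d φ u *ᵥ Pi.single j 1 = if φ j = u then Pi.single j 1 else 0 := by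
  ext i
  by_cases hij : i = j
  · subst hij; split_ifs <;> simp [diagInd, *]
  · split_ifs <;> simp [diagInd, hij]

theorem toLin'_diagInd_eq_zero {u : Fin d}
    (h : dotProductBilin ℝ ℝ (1 : Fin k → ℝ) ∘ₗ toLin' (diagInd k d φ u) = 0) :
    toLin' (diagInd k d φ u) = 0 := by
  ext j i
  have hj := LinearMap.congr_fun h (Pi.single j 1)
  rw [LinearMap.comp_apply, toLin'_apply, diagInd_mulVec_single] at hj
  by_cases hju : φ j = u
  · simp [hju] at hj
  · simp [diagInd, hju]

variable (Q : Matrix (Fin k) (Fin k) ℝ)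

theorem nullSpace_le_comap_diagInd (u : Fin d) :
    nullSpace k d Q φ ≤ (nullSpace k d Q φ).comap (toLin' (diagInd k d φ u)) := by
  intro v hv l u₀
  rw [toLin'_apply, mulVec_mulVec, mul_assoc,
    completeOrthogonalIdempotents_diagInd.toOrthogonalIdempotents.mul_eq]
  split_ifs with h
  · exact h ▸ hv l u₀
  · simp

theorem nullSpace_le_ker_dotProduct_one :
    nullSpace k d Q φ ≤ LinearMap.ker (dotProductBilin ℝ ℝ (1 : Fin k → ℝ)) := by
  intro v hv
  calc 1 ⬝ᵥ v = 1 ⬝ᵥ ((∑ u, diagInd k d φ u) *ᵥ v) := by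
        rw [completeOrthogonalIdempotents_diagInd.complete, one_mulVec]
    _ = ∑ u, 1 ⬝ᵥ (diagInd k d φ u *ᵥ v) := by rw [sum_mulVec, dotProduct_sum]
    _ = 0 := Finset.sum_eq_zero fun u _ => by simpa [chain] using hv [] u

end nullSpace

theorem exists_basis_matrix_nullSpace_general
    (k d : ℕ) (φ : Fin k → Fin d)
    (Q : Matrix (Fin k) (Fin k) ℝ)
    (khat : ℕ) (hkhat : khat = k - Module.finrank ℝ (nullSpace k d Q φ)) :
    ∃ (T : Matrix (Fin khat) (Fin k) ℝ) (φhat : Fin khat → Fin d),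
      T.rank = khat ∧
      (∀ (i : Fin khat) (j : Fin k), φhat i ≠ φ j → T i j = 0) ∧
      LinearMap.ker T.mulVecLin = nullSpace k d Q φ ∧
      (1 : Fin khat → ℝ) ᵥ* T = (1 : Fin k → ℝ) := by
  obtain ⟨φhat, L, hsurj, hker, hblock, hsum⟩ :=
    CompleteOrthogonalIdempotents.exists_surjective_linearMap_ker_eq
      (completeOrthogonalIdempotents_diagInd.map toLinAlgEquiv'.toRingHom) (nullSpace k d Q φ)
      (nullSpace_le_comap_diagInd Q) _ (nullSpace_le_ker_dotProduct_one Q)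
      (fun _ => toLin'_diagInd_eq_zero) (n := khat) (by rwa [Module.finrank_fin_fun])
  refine ⟨LinearMap.toMatrix' L, φhat, ?_, fun i j h => ?_, ?_, ?_⟩
  · rw [Matrix.rank, ← toLin'_apply', toLin'_toMatrix', LinearMap.range_eq_top.mpr hsurj,
      finrank_top, Module.finrank_fin_fun]
  · rw [LinearMap.toMatrix'_apply]
    exact hblock (φ j) _ ⟨Pi.single j 1, (diagInd_mulVec_single _ _).trans (if_pos rfl)⟩ i h
  · rw [← toLin'_apply', toLin'_toMatrix', hker]
  · ext j
    simp [vecMul, dotProduct, LinearMap.toMatrix'_apply, hsum]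

/-- With `k̂ = k − dim V_N` there exist a full-row-rank `T ∈ ℝ^{k̂×k}` and
`φ̂ : Fin k̂ → Fin d` such that `T i j = 0` whenever `φ̂ i ≠ φ j`, `ker T = V_N`, and the rows
of `T` sum to `eᵀ`. -/
theorem exists_basis_matrix_nullSpace
    (k d : ℕ) (hk : 0 < k) (hd : 0 < d) (φ : Fin k → Fin d)
    (Q : Matrix (Fin k) (Fin k) ℝ)
    (hQ : (1 : Fin k → ℝ) ᵥ* Q = 1)
    (ρ : Fin k → ℝ) (hρ : Q *ᵥ ρ = ρ)
    (khat : ℕ) (hkhat : khat = k - Module.finrank ℝ (nullSpace k d Q φ)) :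
    ∃ (T : Matrix (Fin khat) (Fin k) ℝ) (φhat : Fin khat → Fin d),
      T.rank = khat ∧
      (∀ (i : Fin khat) (j : Fin k), φhat i ≠ φ j → T i j = 0) ∧
      LinearMap.ker T.mulVecLin = nullSpace k d Q φ ∧
      (1 : Fin khat → ℝ) ᵥ* T = (1 : Fin k → ℝ) :=
  exists_basis_matrix_nullSpace_general k d φ Q khat hkhat
end

section
/- Let T ∈ ℝ^{k×m} have full column rank m, suppose the column space of T is Q-invariant (Q·(col span T) ⊆ col span T), ρ lies in the column space of T, and e^T T = ê^T, where ê ∈ ℝ^m is the all-ones vector. Then there exist a unique matrix Q̂ ∈ ℝ^{m×m} with Q T = T Q̂ and a unique vector ρ̂ ∈ ℝ^m with ρ = T ρ̂, and these satisfy ê^T Q̂ = ê^T and Q̂ ρ̂ = ρ̂; that is, Q̂ has an eigenvalue at one with left eigenvector ê and right eigenvector ρ̂. -/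
/-! Full column rank makes `x ↦ T x` injective, so `Q̂` and `ρ̂` are unique; they exist because
every column of `Q T` lies in the column space of `T`. From `Q T = T Q̂`, the left fixed vector
`eᵀ` of `Q` pulls back to `eᵀ T = êᵀ`, and `T (Q̂ ρ̂) = Q T ρ̂ = Q ρ = ρ = T ρ̂` gives `Q̂ ρ̂ = ρ̂`. -/

open Matrix

namespace Matrix

variable {m n p R K : Type*}

theorem mulVec_injective_of_rank_eq_card [Field K] [Fintype n] {A : Matrix m n K}
    (h : A.rank = Fintype.card n) : Function.Injective A.mulVec :=
  mulVec_injective_iff.mpr <| linearIndependent_iff_card_eq_finrank_span.mpr <|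
    h.symm.trans A.rank_eq_finrank_span_cols

theorem mul_right_injective_of_mulVec_injective [Semiring R] [Fintype n] {A : Matrix m n R}
    (h : Function.Injective A.mulVec) : Function.Injective (fun B : Matrix n p R => A * B) :=
  fun _ _ hBC => ext_col fun j => h congr(($hBC).col j)

theorem exists_eq_mul_of_range_mulVecLin_le [CommSemiring R] [Fintype n] [Fintype p]
    {A : Matrix m p R} {B : Matrix m n R}
    (h : LinearMap.range A.mulVecLin ≤ LinearMap.range B.mulVecLin) :
    ∃ C : Matrix n p R, A = B * C := by
  have hcol (j : p) : ∃ c : n → R, B *ᵥ c = A.col j := by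
    have hj : A.col j ∈ LinearMap.range A.mulVecLin := by
      rw [range_mulVecLin]
      exact Submodule.subset_span ⟨j, rfl⟩
    exact h hj
  choose c hc using hcol
  exact ⟨(of c)ᵀ, ext_col fun j => (hc j).symm⟩

theorem vecMul_eq_self_of_mul_eq_mul [Semiring R] [Fintype m] [Fintype n]
    {A : Matrix m m R} {T : Matrix m n R} {B : Matrix n n R} (hAT : A * T = T * B)
    {v : m → R} (hv : v ᵥ* A = v) : (v ᵥ* T) ᵥ* B = v ᵥ* T := by
  rw [vecMul_vecMul, ← hAT, ← vecMul_vecMul, hv]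

theorem mulVec_eq_self_of_mul_eq_mul [Semiring R] [Fintype m] [Fintype n]
    {A : Matrix m m R} {T : Matrix m n R} {B : Matrix n n R} (hAT : A * T = T * B)
    (hT : Function.Injective T.mulVec) {x : n → R} (hx : A *ᵥ (T *ᵥ x) = T *ᵥ x) :
    B *ᵥ x = x :=
  hT <| by rw [mulVec_mulVec, ← hAT, ← mulVec_mulVec, hx]

end Matrix

theorem restricted_matrix_eigen_general
    (k m : ℕ)
    (Q : Matrix (Fin k) (Fin k) ℝ)
    (hQ : (1 : Fin k → ℝ) ᵥ* Q = 1)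
    (ρ : Fin k → ℝ) (hρ : Q *ᵥ ρ = ρ)
    (T : Matrix (Fin k) (Fin m) ℝ)
    (hrank : T.rank = m)
    (hinv : ∀ v ∈ LinearMap.range T.mulVecLin, Q *ᵥ v ∈ LinearMap.range T.mulVecLin)
    (hρmem : ρ ∈ LinearMap.range T.mulVecLin)
    (hsum : (1 : Fin k → ℝ) ᵥ* T = 1) :
    (∃! Qhat : Matrix (Fin m) (Fin m) ℝ, Q * T = T * Qhat) ∧
    (∃! ρhat : Fin m → ℝ, ρ = T *ᵥ ρhat) ∧
    (∀ (Qhat : Matrix (Fin m) (Fin m) ℝ) (ρhat : Fin m → ℝ),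
      Q * T = T * Qhat → ρ = T *ᵥ ρhat →
      (1 : Fin m → ℝ) ᵥ* Qhat = 1 ∧ Qhat *ᵥ ρhat = ρhat) := by
  have hT : Function.Injective T.mulVec :=
    mulVec_injective_of_rank_eq_card (by rw [hrank, Fintype.card_fin])
  have hrange : LinearMap.range (Q * T).mulVecLin ≤ LinearMap.range T.mulVecLin := by
    rw [mulVecLin_mul, LinearMap.range_comp, Submodule.map_le_iff_le_comap]
    exact hinv
  obtain ⟨Qhat, hQhat⟩ := exists_eq_mul_of_range_mulVecLin_le hrange
  obtain ⟨ρhat, hρhat⟩ := hρmem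
  refine ⟨⟨Qhat, hQhat, fun B hB =>
      mul_right_injective_of_mulVec_injective hT (hB.symm.trans hQhat)⟩,
    ⟨ρhat, hρhat.symm, fun x hx => hT (hx.symm.trans hρhat.symm)⟩,
    fun B x hB hx => ⟨?_, mulVec_eq_self_of_mul_eq_mul hB hT (by rw [← hx, hρ])⟩⟩
  simpa only [hsum] using vecMul_eq_self_of_mul_eq_mul hB hQ

/-- If `T ∈ ℝ^{k×m}` has full column rank, its column space is `Q`-invariant and
contains `ρ`, and every column of `T` sums to `1`, then there are a unique `Q̂` with
`Q T = T Q̂` and a unique `ρ̂` with `ρ = T ρ̂`, and these satisfy `êᵀ Q̂ = êᵀ` and `Q̂ ρ̂ = ρ̂`. -/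
theorem restricted_matrix_eigen
    (k m : ℕ) (hk : 0 < k)
    (Q : Matrix (Fin k) (Fin k) ℝ)
    (hQ : (1 : Fin k → ℝ) ᵥ* Q = 1)
    (ρ : Fin k → ℝ) (hρ : Q *ᵥ ρ = ρ)
    (T : Matrix (Fin k) (Fin m) ℝ)
    (hrank : T.rank = m)
    (hinv : ∀ v ∈ LinearMap.range T.mulVecLin, Q *ᵥ v ∈ LinearMap.range T.mulVecLin)
    (hρmem : ρ ∈ LinearMap.range T.mulVecLin)
    (hsum : (1 : Fin k → ℝ) ᵥ* T = 1) :
    (∃! Qhat : Matrix (Fin m) (Fin m) ℝ, Q * T = T * Qhat) ∧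
    (∃! ρhat : Fin m → ℝ, ρ = T *ᵥ ρhat) ∧
    (∀ (Qhat : Matrix (Fin m) (Fin m) ℝ) (ρhat : Fin m → ℝ),
      Q * T = T * Qhat → ρ = T *ᵥ ρhat →
      (1 : Fin m → ℝ) ᵥ* Qhat = 1 ∧ Qhat *ᵥ ρhat = ρhat) :=
  restricted_matrix_eigen_general k m Q hQ ρ hρ T hrank hinv hρmem hsum
end

section
/- Let T ∈ ℝ^{m×k} have full row rank m, suppose ker T is Q-invariant (Q·ker T ⊆ ker T), and e^T = ê^T T, where ê ∈ ℝ^m is the all-ones vector. Define ρ̂ = Tρ ∈ ℝ^m. Then there exists a unique matrix Q̂ ∈ ℝ^{m×m} with Q̂ T = T Q, and it satisfies ê^T Q̂ = ê^T and Q̂ ρ̂ = ρ̂; that is, Q̂ has an eigenvalue at one with left eigenvector ê and right eigenvector ρ̂. -/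
/-!
Full row rank makes `T` right invertible, say `T * B = 1`. Invariance of `ker T` under `Q`
means `ker T ⊆ ker (T * Q)`, so `T * Q` factors through `T` as `(T * Q * B) * T`, and the factor
is unique because `T` can be cancelled on the right. The eigenvector identities then transport
along `Q̂ * T = T * Q`: `êᵀ Q̂ T = êᵀ T Q = eᵀ Q = eᵀ = êᵀ T`, and `Q̂ (T ρ) = T (Q ρ) = T ρ`.
-/

open Matrix

namespace Matrix

theorem exists_mul_eq_one_of_rank_eq_card {K m n : Type*} [Field K] [Fintype m] [Fintype n]
    [DecidableEq m] {T : Matrix m n K} (hT : T.rank = Fintype.card m) :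
    ∃ B : Matrix n m K, T * B = 1 := by
  have hrange : LinearMap.range T.mulVecLin = ⊤ :=
    Submodule.eq_top_of_finrank_eq (by rw [← rank, hT, Module.finrank_fintype_fun_eq_card])
  exact mulVec_surjective_iff_exists_right_inverse.mp (LinearMap.range_eq_top.mp hrange)

variable {R l m n : Type*} [Ring R] [Fintype m] [Fintype n] [DecidableEq m]
  {T : Matrix m n R} {B : Matrix n m R}

theorem vecMul_injective_of_mul_eq_one (hB : T * B = 1) : Function.Injective (· ᵥ* T) := by
  intro x y hxy
  simpa [vecMul_vecMul, hB] using congrArg (· ᵥ* B) hxy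

theorem mul_mul_eq_self_of_ker_le {A : Matrix l n R} (hB : T * B = 1)
    (hker : ∀ v, T *ᵥ v = 0 → A *ᵥ v = 0) : A * B * T = A := by
  refine ext_iff_mulVec.mpr fun v => ?_
  have hv : T *ᵥ (B *ᵥ (T *ᵥ v) - v) = 0 := by
    rw [mulVec_sub, mulVec_mulVec, hB, one_mulVec, sub_self]
  simpa [mulVec_sub, mulVec_mulVec, sub_eq_zero, Matrix.mul_assoc] using hker _ hv

theorem existsUnique_mul_eq_of_ker_le {A : Matrix l n R} (hB : T * B = 1)
    (hker : ∀ v, T *ᵥ v = 0 → A *ᵥ v = 0) : ∃! X : Matrix l m R, X * T = A := by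
  refine ⟨A * B, mul_mul_eq_self_of_ker_le hB hker, fun X hX => ?_⟩
  rw [← hX, Matrix.mul_assoc, hB, Matrix.mul_one]

theorem vecMul_eq_self_of_mul_eq_mul_s6 {Q : Matrix n n R} {Qhat : Matrix m m R} {w : m → R} {u : n → R}
    (hB : T * B = 1) (hQhat : Qhat * T = T * Q) (hwT : w ᵥ* T = u) (hu : u ᵥ* Q = u) :
    w ᵥ* Qhat = w :=
  vecMul_injective_of_mul_eq_one hB <| by
    change w ᵥ* Qhat ᵥ* T = w ᵥ* T
    rw [vecMul_vecMul, hQhat, ← vecMul_vecMul, hwT, hu]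

end Matrix

theorem quotient_matrix_eigen_general
    (k m : ℕ)
    (Q : Matrix (Fin k) (Fin k) ℝ)
    (hQ : (1 : Fin k → ℝ) ᵥ* Q = 1)
    (ρ : Fin k → ℝ) (hρ : Q *ᵥ ρ = ρ)
    (T : Matrix (Fin m) (Fin k) ℝ)
    (hrank : T.rank = m)
    (hinv : ∀ v : Fin k → ℝ, T *ᵥ v = 0 → T *ᵥ (Q *ᵥ v) = 0)
    (hsum : (1 : Fin m → ℝ) ᵥ* T = (1 : Fin k → ℝ)) :
    (∃! Qhat : Matrix (Fin m) (Fin m) ℝ, Qhat * T = T * Q) ∧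
    (∀ Qhat : Matrix (Fin m) (Fin m) ℝ, Qhat * T = T * Q →
      (1 : Fin m → ℝ) ᵥ* Qhat = 1 ∧ Qhat *ᵥ (T *ᵥ ρ) = T *ᵥ ρ) := by
  obtain ⟨B, hB⟩ := exists_mul_eq_one_of_rank_eq_card (hrank.trans (Fintype.card_fin m).symm)
  have hker : ∀ v, T *ᵥ v = 0 → (T * Q) *ᵥ v = 0 := fun v hv => by
    rw [← mulVec_mulVec]; exact hinv v hv
  refine ⟨existsUnique_mul_eq_of_ker_le hB hker, fun Qhat hQhat => ⟨?_, ?_⟩⟩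
  · exact vecMul_eq_self_of_mul_eq_mul_s6 hB hQhat hsum hQ
  · rw [mulVec_mulVec, hQhat, ← mulVec_mulVec, hρ]

/-- If `T ∈ ℝ^{m×k}` has full row rank, `ker T` is `Q`-invariant, and
`eᵀ = êᵀ T`, then there is a unique `Q̂` with `Q̂ T = T Q`, and with `ρ̂ = T ρ` it satisfies
`êᵀ Q̂ = êᵀ` and `Q̂ ρ̂ = ρ̂`. -/
theorem quotient_matrix_eigen
    (k m : ℕ) (hk : 0 < k)
    (Q : Matrix (Fin k) (Fin k) ℝ)
    (hQ : (1 : Fin k → ℝ) ᵥ* Q = 1)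
    (ρ : Fin k → ℝ) (hρ : Q *ᵥ ρ = ρ)
    (T : Matrix (Fin m) (Fin k) ℝ)
    (hrank : T.rank = m)
    (hinv : ∀ v : Fin k → ℝ, T *ᵥ v = 0 → T *ᵥ (Q *ᵥ v) = 0)
    (hsum : (1 : Fin m → ℝ) ᵥ* T = (1 : Fin k → ℝ)) :
    (∃! Qhat : Matrix (Fin m) (Fin m) ℝ, Qhat * T = T * Q) ∧
    (∀ Qhat : Matrix (Fin m) (Fin m) ℝ, Qhat * T = T * Q →
      (1 : Fin m → ℝ) ᵥ* Qhat = 1 ∧ Qhat *ᵥ (T *ᵥ ρ) = T *ᵥ ρ) :=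
  quotient_matrix_eigen_general k m Q hQ ρ hρ T hrank hinv hsum
end

section
/- Suppose T ∈ ℝ^{k×k̂} has full column rank k̂, its column space equals V_R, there is a map φ̂ : {1,…,k̂} → {1,…,d} with T_{ij} = 0 whenever φ(i) ≠ φ̂(j), and e^T T = ê^T where ê ∈ ℝ^{k̂} is the all-ones vector. Let Q̂ ∈ ℝ^{k̂×k̂} and ρ̂ ∈ ℝ^{k̂} be the unique solutions of Q T = T Q̂ and ρ = T ρ̂ (which exist since V_R is Q-invariant and contains ρ), and let Î_u ∈ ℝ^{k̂×k̂} be the diagonal 0/1 matrix of φ̂. Then for every n ≥ 1, every pair of words w = (w_1,…,w_n), w' = (w'_1,…,w'_n) ∈ {1,…,d}^n and every z ∈ {1,…,d}: Σ_{i : φ(i) = z} [e^T I_{w_n} Q I_{w_{n−1}} Q ⋯ I_{w_1} Q]_i · [ρ^T I_{w'_n} Q^T ⋯ I_{w'_1} Q^T]_i = Σ_{j : φ̂(j) = z} [ê^T Î_{w_n} Q̂ Î_{w_{n−1}} Q̂ ⋯ Î_{w_1} Q̂]_j · [ρ̂^T Î_{w'_n} Q̂^T ⋯ Î_{w'_1}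 Q̂^T]_j. That is, the third-order tensor A ⊗ B ⊗ C built from (e, Q, ρ, φ) equals the tensor Â ⊗ B̂ ⊗ Ĉ built from (ê, Q̂, ρ̂, φ̂). -/
open Matrix

/-! Because `T` respects the block patterns of `φ` and `φ̂`, it intertwines the projections,
`I_u T = T Î_u`; together with `Q T = T Q̂` it intertwines every chain, and transposing the
same identity for `Tᵀ` handles the chains of `Qᵀ`. Each side of the tensor identity is
`e^T (chain Q w) I_z (chain Qᵀ w')ᵀ ρ`; substituting `ρ = T ρ̂` and moving `T` all the way to
the left, where `e^T T = ê^T`, turns the left side into the right one. -/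

section Intertwining

variable {m n d : ℕ} {φ : Fin m → Fin d} {φhat : Fin n → Fin d} {T : Matrix (Fin m) (Fin n) ℝ}

lemma diagInd_mul_eq_mul_diagInd (hpattern : ∀ i j, φ i ≠ φhat j → T i j = 0) (u : Fin d) :
    diagInd m d φ u * T = T * diagInd n d φhat u := by
  ext i j
  simp only [diagInd, diagonal_mul, mul_diagonal]
  by_cases h : φ i = φhat j
  · rw [h, mul_comm]
  · rw [hpattern i j h, zero_mul, mul_zero]

lemma chain_mul_eq_mul_chain (hpattern : ∀ i j, φ i ≠ φhat j → T i j = 0)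
    {Q : Matrix (Fin m) (Fin m) ℝ} {Qhat : Matrix (Fin n) (Fin n) ℝ} (hQT : Q * T = T * Qhat)
    (l : List (Fin d)) :
    chain m d Q φ l * T = T * chain n d Qhat φhat l := by
  induction l with
  | nil => simp [chain]
  | cons u l ih =>
    calc chain m d Q φ (u :: l) * T = diagInd m d φ u * (Q * T) * chain n d Qhat φhat l := by
          simp only [chain, Matrix.mul_assoc, ih]
      _ = T * chain n d Qhat φhat (u :: l) := by
          rw [hQT, ← Matrix.mul_assoc, diagInd_mul_eq_mul_diagInd hpattern]
          simp only [chain, Matrix.mul_assoc]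

lemma transpose_chain_transpose_mul (hpattern : ∀ i j, φ i ≠ φhat j → T i j = 0)
    {Q : Matrix (Fin m) (Fin m) ℝ} {Qhat : Matrix (Fin n) (Fin n) ℝ} (hQT : Q * T = T * Qhat)
    (l : List (Fin d)) :
    (chain m d Qᵀ φ l)ᵀ * T = T * (chain n d Qhatᵀ φhat l)ᵀ := by
  have hQTt : Qhatᵀ * Tᵀ = Tᵀ * Qᵀ := by rw [← transpose_mul, ← hQT, transpose_mul]
  have h := chain_mul_eq_mul_chain (T := Tᵀ) (fun i j h => hpattern j i (Ne.symm h)) hQTt l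
  simpa only [transpose_mul, transpose_transpose] using congrArg transpose h.symm

end Intertwining

lemma sum_filter_mul_eq_dotProduct {m d : ℕ} (φ : Fin m → Fin d) (z : Fin d)
    (a b : Fin m → ℝ) :
    ∑ i ∈ Finset.univ.filter (fun i => φ i = z), a i * b i = (a ᵥ* diagInd m d φ z) ⬝ᵥ b := by
  rw [Finset.sum_filter]
  simp only [dotProduct, diagInd, vecMul_diagonal]
  refine Finset.sum_congr rfl fun i _ => ?_
  split_ifs <;> ring

theorem tensor_reduction_reachable_general
    (k d khat : ℕ) (φ : Fin k → Fin d)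
    (Q : Matrix (Fin k) (Fin k) ℝ)
    (ρ : Fin k → ℝ)
    (T : Matrix (Fin k) (Fin khat) ℝ) (φhat : Fin khat → Fin d)
    (hpattern : ∀ (i : Fin k) (j : Fin khat), φ i ≠ φhat j → T i j = 0)
    (hsum : (1 : Fin k → ℝ) ᵥ* T = 1)
    (Qhat : Matrix (Fin khat) (Fin khat) ℝ) (ρhat : Fin khat → ℝ)
    (hQT : Q * T = T * Qhat)
    (hρT : ρ = T *ᵥ ρhat) :
    ∀ (w w' : List (Fin d)), w ≠ [] → w' ≠ [] → w.length = w'.length →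
      ∀ z : Fin d,
        ∑ i ∈ Finset.univ.filter (fun i : Fin k => φ i = z),
          ((1 : Fin k → ℝ) ᵥ* chain k d Q φ w) i * (ρ ᵥ* chain k d Qᵀ φ w') i =
        ∑ j ∈ Finset.univ.filter (fun j : Fin khat => φhat j = z),
          ((1 : Fin khat → ℝ) ᵥ* chain khat d Qhat φhat w) j *
            (ρhat ᵥ* chain khat d Qhatᵀ φhat w') j := by
  intro w w' _ _ _ z
  have hright : ρ ᵥ* chain k d Qᵀ φ w' = T *ᵥ (ρhat ᵥ* chain khat d Qhatᵀ φhat w') := by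
    rw [← mulVec_transpose, ← mulVec_transpose, hρT, mulVec_mulVec, mulVec_mulVec,
      transpose_chain_transpose_mul hpattern hQT]
  have hleft : (1 : Fin k → ℝ) ᵥ* chain k d Q φ w ᵥ* diagInd k d φ z ᵥ* T =
      (1 : Fin khat → ℝ) ᵥ* chain khat d Qhat φhat w ᵥ* diagInd khat d φhat z := by
    rw [vecMul_vecMul, vecMul_vecMul, diagInd_mul_eq_mul_diagInd hpattern, ← Matrix.mul_assoc,
      chain_mul_eq_mul_chain hpattern hQT, Matrix.mul_assoc, ← vecMul_vecMul, hsum, vecMul_vecMul]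
  rw [sum_filter_mul_eq_dotProduct, sum_filter_mul_eq_dotProduct, hright, dotProduct_mulVec,
    hleft]

/-- Theorem 5, reduction by the reachable subspace: if `T` is a full-column-rank
matrix whose column space is `V_R`, with the zero pattern of `φ, φ̂` and columns summing to one,
and `Q̂, ρ̂` solve `Q T = T Q̂`, `ρ = T ρ̂`, then the third-order tensors built from
`(e, Q, ρ, φ)` and `(ê, Q̂, ρ̂, φ̂)` coincide. -/
theorem tensor_reduction_reachable
    (k d khat : ℕ) (hk : 0 < k) (hd : 0 < d) (φ : Fin k → Fin d)
    (Q : Matrix (Fin k) (Fin k) ℝ)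
    (hQ : (1 : Fin k → ℝ) ᵥ* Q = 1)
    (ρ : Fin k → ℝ) (hρ : Q *ᵥ ρ = ρ)
    (T : Matrix (Fin k) (Fin khat) ℝ) (φhat : Fin khat → Fin d)
    (hrank : T.rank = khat)
    (hrange : LinearMap.range T.mulVecLin = reachSpace k d Q φ ρ)
    (hpattern : ∀ (i : Fin k) (j : Fin khat), φ i ≠ φhat j → T i j = 0)
    (hsum : (1 : Fin k → ℝ) ᵥ* T = 1)
    (Qhat : Matrix (Fin khat) (Fin khat) ℝ) (ρhat : Fin khat → ℝ)
    (hQT : Q * T = T * Qhat)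
    (hρT : ρ = T *ᵥ ρhat) :
    ∀ (w w' : List (Fin d)), w ≠ [] → w' ≠ [] → w.length = w'.length →
      ∀ z : Fin d,
        ∑ i ∈ Finset.univ.filter (fun i : Fin k => φ i = z),
          ((1 : Fin k → ℝ) ᵥ* chain k d Q φ w) i * (ρ ᵥ* chain k d Qᵀ φ w') i =
        ∑ j ∈ Finset.univ.filter (fun j : Fin khat => φhat j = z),
          ((1 : Fin khat → ℝ) ᵥ* chain khat d Qhat φhat w) j *
            (ρhat ᵥ* chain khat d Qhatᵀ φhat w') j :=
  tensor_reduction_reachable_general k d khat φ Q ρ T φhat hpattern hsum Qhat ρhat hQT hρT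
end

section
/- Suppose T_R ∈ ℝ^{k×k̂_R} has full column rank with column space V_R, T_{R,ij} = 0 whenever φ(i) ≠ φ̂_R(j) for a map φ̂_R : {1,…,k̂_R} → {1,…,d}, and e^T T_R = ê_R^T where ê_R ∈ ℝ^{k̂_R} is the all-ones vector; suppose T_N ∈ ℝ^{k̂_N×k} has full row rank with ker T_N = V_N, T_{N,ij} = 0 whenever φ̂_N(i) ≠ φ(j) for a map φ̂_N : {1,…,k̂_N} → {1,…,d}, and e^T = ê_N^T T_N where ê_N ∈ ℝ^{k̂_N} is the all-ones vector. Let Q̂_R ∈ ℝ^{k̂_R×k̂_R} be the unique matrix with Q T_R = T_R Q̂_R, and let k̂ = rank(T_N T_R). Then there exist a full-row-rank matrix T ∈ ℝ^{k̂×k̂_R} and a map φ̂ : {1,…,k̂} → {1,…,d} such that: (i) T_{ij} = 0 whenever φ̂(i) ≠ φ̂_R(j); (ii) ker T = ker(T_N T_R); (iii) ê_R^T = ê^T T, where ê ∈ ℝ^{k̂} is the all-ones vector; and (iv) Q̂_R · ker T ⊆ ker T. -/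
open Matrix

/-!
The rows of `M = T_N T_R` fall into blocks according to the label `φ̂_N i` of the row. By the
sparsity patterns, a row of label `u` is supported on the columns of label `u`, so the row space
of `M` is the direct sum of the spans `W_u` of the blocks. Since the columns of `M` sum to one, the
rows of label `u` add up to the indicator `s_u` of the columns of label `u`, a vector of `W_u`
which vanishes only if `W_u = 0`. Every nonzero vector is the sum of the vectors of some basis
(linear automorphisms act transitively on nonzero vectors), so gluing bases of the `W_u` summing
to the `s_u` gives the rows of `T`: they span the row space of `M`, which fixes rank and kernel,
and their sum is the all-ones vector. Finally `V_N` is `Q`-invariant because the `I_u` sum to the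
identity, and `Q T_R = T_R Q̂_R` carries this over to `ker (T_N T_R)`.
-/

open Module Submodule

theorem exists_linearEquiv_apply_eq {K V : Type*} [DivisionRing K] [AddCommGroup V]
    [Module K V] {x y : V} (hx : x ≠ 0) (hy : y ≠ 0) : ∃ e : V ≃ₗ[K] V, e x = y := by
  obtain ⟨e, he⟩ := Submodule.exists_linearEquiv_restrict_eq
    ((LinearEquiv.toSpanNonzeroSingleton K V x hx).symm ≪≫ₗ
      LinearEquiv.toSpanNonzeroSingleton K V y hy)
  refine ⟨e, ?_⟩
  simpa [LinearEquiv.coord_self] using (he ⟨x, mem_span_singleton_self x⟩).symm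

theorem Module.Basis.sum_ne_zero {ι R M : Type*} [Ring R] [Nontrivial R] [AddCommGroup M]
    [Module R M] [Fintype ι] [Nonempty ι] (b : Basis ι R M) : ∑ i, b i ≠ 0 := fun h =>
  one_ne_zero <| Fintype.linearIndependent_iff.1 b.linearIndependent (fun _ => 1)
    (by simpa using h) (Classical.arbitrary ι)

section Basis

variable {K V : Type*} [DivisionRing K] [AddCommGroup V] [Module K V]

theorem Module.exists_finBasis_sum_eq [FiniteDimensional K V] {s : V} (hs : s ≠ 0) :
    ∃ b : Basis (Fin (finrank K V)) K V, ∑ i, b i = s := by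
  have : Nontrivial V := ⟨⟨s, 0, hs⟩⟩
  have : Nonempty (Fin (finrank K V)) := ⟨⟨0, finrank_pos⟩⟩
  let b₀ := finBasis K V
  obtain ⟨e, he⟩ := exists_linearEquiv_apply_eq (K := K) b₀.sum_ne_zero hs
  exact ⟨b₀.map e, by simp [← map_sum, he]⟩

theorem Submodule.exists_finBasis_sum_eq (W : Submodule K V) [FiniteDimensional K W] {s : V}
    (hs : s ∈ W) (hW : s = 0 → W = ⊥) :
    ∃ b : Basis (Fin (finrank K W)) K W, ∑ i, (b i : V) = s := by
  by_cases h0 : s = 0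
  · have : IsEmpty (Fin (finrank K W)) := by
      rw [hW h0, finrank_bot]
      infer_instance
    exact ⟨finBasis K W, by simp [h0]⟩
  · obtain ⟨b, hb⟩ := Module.exists_finBasis_sum_eq (K := K) (s := (⟨s, hs⟩ : W))
      (by simpa using h0)
    exact ⟨b, by simpa using congrArg Subtype.val hb⟩

end Basis

theorem Submodule.disjoint_pi_bot_compl {K n : Type*} [Semiring K] (s : Set n) :
    Disjoint (pi s fun _ => (⊥ : Submodule K K)) (pi sᶜ fun _ => ⊥) := by
  refine disjoint_def.2 fun v hv hv' => funext fun j => ?_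
  by_cases hj : j ∈ s
  · exact (mem_bot K).1 (hv j hj)
  · exact (mem_bot K).1 (hv' j hj)

namespace Matrix

variable {K l m n κ : Type*}

section RowSpace

variable [Field K] [Fintype n]

theorem mulVec_eq_zero_iff_span_row_le (A : Matrix m n K) (v : n → K) :
    A *ᵥ v = 0 ↔ span K (Set.range A.row) ≤ LinearMap.ker ((dotProductBilin K K).flip v) := by
  rw [span_le, Set.range_subset_iff, funext_iff]
  rfl

theorem ker_mulVecLin_eq_of_span_row_eq {A : Matrix m n K} {B : Matrix l n K}
    (h : span K (Set.range A.row) = span K (Set.range B.row)) :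
    LinearMap.ker A.mulVecLin = LinearMap.ker B.mulVecLin := by
  ext v
  simp only [LinearMap.mem_ker, mulVecLin_apply, mulVec_eq_zero_iff_span_row_le, h]

end RowSpace

theorem mul_mulVec_mulVec_eq_zero_of_mul_eq_mul [NonUnitalSemiring K] [Fintype m] [Fintype n]
    {A : Matrix l m K} {B : Matrix m n K} {P : Matrix m m K}
    {P' : Matrix n n K} (hA : ∀ w, A *ᵥ w = 0 → A *ᵥ (P *ᵥ w) = 0) (hPB : P * B = B * P')
    {v : n → K} (hv : (A * B) *ᵥ v = 0) : (A * B) *ᵥ (P' *ᵥ v) = 0 := by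
  rw [← mulVec_mulVec, mulVec_mulVec _ B, ← hPB, ← mulVec_mulVec]
  exact hA _ (by rwa [mulVec_mulVec])

def RespectsLabels [Zero K] (A : Matrix m n K) (f : m → κ) (g : n → κ) : Prop :=
  ∀ i j, f i ≠ g j → A i j = 0

theorem RespectsLabels.mul [Fintype m] [NonUnitalNonAssocSemiring K]
    {A : Matrix l m K} {B : Matrix m n K} {f : l → κ} {g : m → κ} {h : n → κ}
    (hA : A.RespectsLabels f g) (hB : B.RespectsLabels g h) : (A * B).RespectsLabels f h := by
  intro i j hij
  rw [mul_apply]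
  refine Finset.sum_eq_zero fun k _ => ?_
  by_cases hk : f i = g k
  · rw [hB k j (hk ▸ hij), mul_zero]
  · rw [hA i k hk, zero_mul]

section Semiring

variable [Semiring K] (M : Matrix m n K) (f : m → κ) (g : n → κ)

def labelRowSpan (u : κ) : Submodule K (n → K) :=
  span K (M.row '' (f ⁻¹' {u}))

theorem iSup_labelRowSpan : ⨆ u, M.labelRowSpan f u = span K (Set.range M.row) := by
  simp only [labelRowSpan, ← span_iUnion, ← Set.image_iUnion, ← Set.preimage_iUnion,
    Set.iUnion_of_singleton, Set.preimage_univ, Set.image_univ]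

variable {M f g}

theorem RespectsLabels.labelRowSpan_le (hM : M.RespectsLabels f g) (u : κ) :
    M.labelRowSpan f u ≤ pi (g ⁻¹' {u})ᶜ fun _ => ⊥ := by
  refine span_le.2 ?_
  rintro _ ⟨i, rfl, rfl⟩ j hj
  exact (mem_bot K).2 (hM i j (Ne.symm hj))

theorem RespectsLabels.disjoint_labelRowSpan_biSup (hM : M.RespectsLabels f g) {u : κ}
    {t : Set κ} (hu : u ∉ t) : Disjoint (M.labelRowSpan f u) (⨆ v ∈ t, M.labelRowSpan f v) := by
  refine (disjoint_pi_bot_compl (g ⁻¹' {u})).symm.mono (hM.labelRowSpan_le u) ?_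
  refine iSup₂_le fun v hv => (hM.labelRowSpan_le v).trans fun x hx j hj => hx j ?_
  intro hjv
  rw [Set.mem_preimage, Set.mem_singleton_iff] at hj hjv
  exact hu (hj ▸ hjv ▸ hv)

end Semiring

section Field

variable [Field K] [Fintype m] [DecidableEq κ] (M : Matrix m n K) (f : m → κ) {g : n → κ}

def labelRowSum (u : κ) : n → K :=
  ∑ i with f i = u, M.row i

theorem labelRowSum_mem_labelRowSpan (u : κ) : M.labelRowSum f u ∈ M.labelRowSpan f u :=
  sum_mem fun i hi => subset_span ⟨i, (Finset.mem_filter.1 hi).2, rfl⟩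

theorem sum_labelRowSum [Fintype κ] : ∑ u, M.labelRowSum f u = 1 ᵥ* M := by
  rw [one_vecMul]
  exact Finset.sum_fiberwise _ f M

variable {M f}

theorem RespectsLabels.labelRowSpan_eq_bot (hM : M.RespectsLabels f g) (hsum : 1 ᵥ* M = 1)
    {u : κ} (hu : M.labelRowSum f u = 0) : M.labelRowSpan f u = ⊥ := by
  have hg : ∀ j, g j ≠ u := by
    intro j hj
    have hcol : M.labelRowSum f u j = (1 ᵥ* M) j := by
      rw [labelRowSum, Finset.sum_apply]
      simp only [row, vecMul, dotProduct, Pi.one_apply, one_mul]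
      refine Finset.sum_filter_of_ne fun i _ hij => ?_
      exact not_not.1 fun hi => hij (hM i j (hj ▸ hi))
    simp [hu, hsum] at hcol
  refine (span_eq_bot).2 ?_
  rintro _ ⟨i, hi, rfl⟩
  exact funext fun j => hM i j (hi ▸ (hg j).symm)

variable [Fintype n] [Fintype κ]

theorem RespectsLabels.exists_sigma_rowBasis (hM : M.RespectsLabels f g) (hsum : 1 ᵥ* M = 1) :
    ∃ T : Matrix (Σ u, Fin (finrank K (M.labelRowSpan f u))) n K,
      LinearIndependent K T.row ∧ span K (Set.range T.row) = span K (Set.range M.row) ∧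
      T.RespectsLabels Sigma.fst g ∧ 1 ᵥ* T = 1 := by
  choose b hb using fun u => (M.labelRowSpan f u).exists_finBasis_sum_eq
    (M.labelRowSum_mem_labelRowSpan f u) (hM.labelRowSpan_eq_bot hsum)
  have hspan (u : κ) :
      span K (Set.range ((M.labelRowSpan f u).subtype ∘ b u)) = M.labelRowSpan f u := by
    rw [Set.range_comp, span_image, (b u).span_eq, Submodule.map_top, range_subtype]
  let r : (Σ u, Fin (finrank K (M.labelRowSpan f u))) → n → K := fun p => b p.1 p.2
  refine ⟨of r, ?_, ?_, ?_, ?_⟩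
  · refine linearIndependent_iUnion_finite
      (fun u => (b u).linearIndependent.map' _ (ker_subtype _)) fun u t _ hu => ?_
    simp only [hspan]
    exact hM.disjoint_labelRowSpan_biSup hu
  · rw [← M.iSup_labelRowSpan, ← iSup_congr hspan, ← span_iUnion]
    exact congrArg (span K) (Set.range_sigma_eq_iUnion_range r)
  · intro p j hj
    exact (mem_bot K).1 (hM.labelRowSpan_le p.1 (b p.1 p.2).2 j hj.symm)
  · rw [one_vecMul]
    change ∑ p, r p = 1
    rw [← hsum, ← M.sum_labelRowSum f, Fintype.sum_sigma]
    exact Fintype.sum_congr _ _ hb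

theorem RespectsLabels.exists_rowBasis (hM : M.RespectsLabels f g) (hsum : 1 ᵥ* M = 1) :
    ∃ (T : Matrix (Fin M.rank) n K) (f' : Fin M.rank → κ),
      span K (Set.range T.row) = span K (Set.range M.row) ∧ T.RespectsLabels f' g ∧
        1 ᵥ* T = 1 := by
  obtain ⟨T, hind, hspan, hlab, hone⟩ := hM.exists_sigma_rowBasis hsum
  have hcard :
      Fintype.card (Fin M.rank) = Fintype.card (Σ u, Fin (finrank K (M.labelRowSpan f u))) := by
    rw [Fintype.card_fin, ← hind.rank_matrix, T.rank_eq_finrank_span_row,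
      M.rank_eq_finrank_span_row, hspan]
  let e := Fintype.equivOfCardEq hcard
  refine ⟨T.submatrix e id, Sigma.fst ∘ e, ?_, fun i j => hlab (e i) j, ?_⟩
  · rw [← hspan]
    exact congrArg (span K) (e.surjective.range_comp T.row)
  · rw [← hone, one_vecMul, one_vecMul]
    exact e.sum_comp T

end Field

end Matrix

section NullSpace

variable {k d : ℕ} {Q : Matrix (Fin k) (Fin k) ℝ} {φ : Fin k → Fin d}

theorem sum_diagInd : ∑ u, diagInd k d φ u = 1 := by
  ext i j
  simp [diagInd, Matrix.sum_apply, Matrix.diagonal_apply, Matrix.one_apply]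

theorem chain_append (l : List (Fin d)) (u : Fin d) :
    chain k d Q φ (l ++ [u]) = chain k d Q φ l * (diagInd k d φ u * Q) := by
  induction l with
  | nil => simp [chain]
  | cons a l ih => simp [chain, ih, mul_assoc]

theorem mulVec_mem_nullSpace {v : Fin k → ℝ} (hv : v ∈ nullSpace k d Q φ) :
    Q *ᵥ v ∈ nullSpace k d Q φ := by
  intro l u₀
  calc (1 : Fin k → ℝ) ⬝ᵥ ((chain k d Q φ l * diagInd k d φ u₀) *ᵥ (Q *ᵥ v))
      = 1 ⬝ᵥ ((chain k d Q φ (l ++ [u₀]) * ∑ u, diagInd k d φ u) *ᵥ v) := by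
        rw [sum_diagInd, mul_one, chain_append, mulVec_mulVec, mul_assoc]
    _ = ∑ u, 1 ⬝ᵥ ((chain k d Q φ (l ++ [u₀]) * diagInd k d φ u) *ᵥ v) := by
        rw [Finset.mul_sum, sum_mulVec, dotProduct_sum]
    _ = 0 := Finset.sum_eq_zero fun u _ => hv _ u

end NullSpace

theorem exists_basis_effective_space_general
    (k d kR kN : ℕ) (φ : Fin k → Fin d)
    (Q : Matrix (Fin k) (Fin k) ℝ)
    (TR : Matrix (Fin k) (Fin kR) ℝ) (φR : Fin kR → Fin d)
    (hRpattern : ∀ (i : Fin k) (j : Fin kR), φ i ≠ φR j → TR i j = 0)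
    (hRsum : (1 : Fin k → ℝ) ᵥ* TR = 1)
    (TN : Matrix (Fin kN) (Fin k) ℝ) (φN : Fin kN → Fin d)
    (hNker : LinearMap.ker TN.mulVecLin = nullSpace k d Q φ)
    (hNpattern : ∀ (i : Fin kN) (j : Fin k), φN i ≠ φ j → TN i j = 0)
    (hNsum : (1 : Fin kN → ℝ) ᵥ* TN = (1 : Fin k → ℝ))
    (QR : Matrix (Fin kR) (Fin kR) ℝ)
    (hQR : Q * TR = TR * QR)
    (khat : ℕ) (hkhat : khat = (TN * TR).rank) :
    ∃ (T : Matrix (Fin khat) (Fin kR) ℝ) (φhat : Fin khat → Fin d),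
      T.rank = khat ∧
      (∀ (i : Fin khat) (j : Fin kR), φhat i ≠ φR j → T i j = 0) ∧
      LinearMap.ker T.mulVecLin = LinearMap.ker (TN * TR).mulVecLin ∧
      (1 : Fin khat → ℝ) ᵥ* T = (1 : Fin kR → ℝ) ∧
      (∀ v : Fin kR → ℝ, T *ᵥ v = 0 → T *ᵥ (QR *ᵥ v) = 0) := by
  subst hkhat
  have hlabels : (TN * TR).RespectsLabels φN φR := RespectsLabels.mul hNpattern hRpattern
  obtain ⟨T, φhat, hspan, hT, hTsum⟩ :=
    hlabels.exists_rowBasis (by rw [← vecMul_vecMul, hNsum, hRsum])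
  have hker := ker_mulVecLin_eq_of_span_row_eq hspan
  have hTN_inv (w : Fin k → ℝ) (hw : TN *ᵥ w = 0) : TN *ᵥ (Q *ᵥ w) = 0 :=
    LinearMap.mem_ker.1 (hNker ▸ mulVec_mem_nullSpace (hNker ▸ LinearMap.mem_ker.2 hw))
  refine ⟨T, φhat, ?_, hT, hker, hTsum, fun v hv => ?_⟩
  · rw [T.rank_eq_finrank_span_row, hspan, ← rank_eq_finrank_span_row]
  · have hker' (w : Fin kR → ℝ) : T *ᵥ w = 0 ↔ (TN * TR) *ᵥ w = 0 := by
      simpa using SetLike.ext_iff.1 hker w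
    exact (hker' _).2 (mul_mulVec_mulVec_eq_zero_of_mul_eq_mul hTN_inv hQR ((hker' v).1 hv))

/-- Proposition 4, basis of the effective space: given structured full-rank
matrices `T_R` (columns spanning `V_R`) and `T_N` (kernel `V_N`) as in Propositions 2–3, and
`Q̂_R` with `Q T_R = T_R Q̂_R`, with `k̂ = rank (T_N T_R)` there exist a full-row-rank
`T ∈ ℝ^{k̂×k̂_R}` and `φ̂` such that `T i j = 0` whenever `φ̂ i ≠ φ̂_R j`,
`ker T = ker (T_N T_R)`, `ê_Rᵀ = êᵀ T`, and `ker T` is `Q̂_R`-invariant. -/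
theorem exists_basis_effective_space
    (k d kR kN : ℕ) (hk : 0 < k) (hd : 0 < d) (φ : Fin k → Fin d)
    (Q : Matrix (Fin k) (Fin k) ℝ)
    (hQ : (1 : Fin k → ℝ) ᵥ* Q = 1)
    (ρ : Fin k → ℝ) (hρ : Q *ᵥ ρ = ρ)
    (TR : Matrix (Fin k) (Fin kR) ℝ) (φR : Fin kR → Fin d)
    (hRrank : TR.rank = kR)
    (hRrange : LinearMap.range TR.mulVecLin = reachSpace k d Q φ ρ)
    (hRpattern : ∀ (i : Fin k) (j : Fin kR), φ i ≠ φR j → TR i j = 0)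
    (hRsum : (1 : Fin k → ℝ) ᵥ* TR = 1)
    (TN : Matrix (Fin kN) (Fin k) ℝ) (φN : Fin kN → Fin d)
    (hNrank : TN.rank = kN)
    (hNker : LinearMap.ker TN.mulVecLin = nullSpace k d Q φ)
    (hNpattern : ∀ (i : Fin kN) (j : Fin k), φN i ≠ φ j → TN i j = 0)
    (hNsum : (1 : Fin kN → ℝ) ᵥ* TN = (1 : Fin k → ℝ))
    (QR : Matrix (Fin kR) (Fin kR) ℝ)
    (hQR : Q * TR = TR * QR)
    (khat : ℕ) (hkhat : khat = (TN * TR).rank) :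
    ∃ (T : Matrix (Fin khat) (Fin kR) ℝ) (φhat : Fin khat → Fin d),
      T.rank = khat ∧
      (∀ (i : Fin khat) (j : Fin kR), φhat i ≠ φR j → T i j = 0) ∧
      LinearMap.ker T.mulVecLin = LinearMap.ker (TN * TR).mulVecLin ∧
      (1 : Fin khat → ℝ) ᵥ* T = (1 : Fin kR → ℝ) ∧
      (∀ v : Fin kR → ℝ, T *ᵥ v = 0 → T *ᵥ (QR *ᵥ v) = 0) :=
  exists_basis_effective_space_general k d kR kN φ Q TR φR hRpattern hRsum TN φN hNker hNpattern
    hNsum QR hQR khat hkhat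
end
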